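/- Let F = F_{π/2} be the closed-form Appell F₁ representation (with θ = π/2) of the Schwarz–Christoffel integral for the isosceles right triangle. Then, as z → 0 with z ≠ 0 in the open unit disk, F(z) + 1/z tends to −(2^{5/4}/3^{3/4}) · [ 2·F₁(1/2, 1/4, 1/4, 3/2; (2−i√2)/4, (2+i√2)/4) − F₁(3/2, 1/4, 1/4, 5/2; (2+i√2)/4, (2−i√2)/4) ]. Consequently the outer conformal center of the isosceles right triangle T_{π/2} equals λ = κ · (2^{5/4}/3^{3/4}) · [ 2·F₁(1/2, 1/4, 1/4, 3/2; (2−i√2)/4, (2+i√2)/4) − F₁(3/2, 1/4, 1/4, 5/2; (2+i√2)/4, (2−i√2)/4) ], where κ = 3^{3/4}Γ(1/4)²/(2^{7/2}π^{3/2}). -/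

import Mathlib

open Complex

/-- A complex number avoids the closed negative real axis (so the principal
branch power with base `w` behaves well). -/
def OffNegAxis (w : ℂ) : Prop := 0 < w.re ∨ w.im ≠ 0

/-- The Appell hypergeometric function `F₁(a,b,b′,c;x,y)` defined by the Euler
integral, with principal branch complex powers. -/
noncomputable def appellF1 (a b b' c : ℝ) (x y : ℂ) : ℂ :=
  ((Real.Gamma c / (Real.Gamma a * Real.Gamma (c - a)) : ℝ) : ℂ) *
    ∫ s in (0 : ℝ)..1,
      (s : ℂ) ^ ((a : ℂ) - 1) * ((1 : ℂ) - (s : ℂ)) ^ ((c : ℂ) - (a : ℂ) - 1) *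
        (1 - (s : ℂ) * x) ^ (-(b : ℂ)) * (1 - (s : ℂ) * y) ^ (-(b' : ℂ))

/-- `ξ(z) = (√π − i√θ)(z+1)/(2√π)`. -/
noncomputable def xiF (θ : ℝ) (z : ℂ) : ℂ :=
  (((Real.sqrt Real.pi : ℝ) : ℂ) - I * ((Real.sqrt θ : ℝ) : ℂ)) * (z + 1) /
    (2 * ((Real.sqrt Real.pi : ℝ) : ℂ))

/-- `η(z) = (√π + i√θ)(z+1)/(2√π)`. -/
noncomputable def etaF (θ : ℝ) (z : ℂ) : ℂ :=
  (((Real.sqrt Real.pi : ℝ) : ℂ) + I * ((Real.sqrt θ : ℝ) : ℂ)) * (z + 1) /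
    (2 * ((Real.sqrt Real.pi : ℝ) : ℂ))

/-- The common base `(π(z−1)² + θ(z+1)²)/(π+θ)` of `φ` and `ψ`. -/
noncomputable def baseF (θ : ℝ) (z : ℂ) : ℂ :=
  (((Real.pi : ℝ) : ℂ) * (z - 1) ^ 2 + ((θ : ℝ) : ℂ) * (z + 1) ^ 2) / (((Real.pi + θ : ℝ)) : ℂ)

/-- `φ(z) = [(π(z−1)² + θ(z+1)²)/(π+θ)]^{(π+θ)/(2π)}` (principal branch). -/
noncomputable def phiF (θ : ℝ) (z : ℂ) : ℂ :=
  baseF θ z ^ ((((Real.pi + θ) / (2 * Real.pi) : ℝ)) : ℂ)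

/-- `ψ(z) = [(π(z−1)² + θ(z+1)²)/(π+θ)]^{(π−θ)/(2π)}` (principal branch). -/
noncomputable def psiF (θ : ℝ) (z : ℂ) : ℂ :=
  baseF θ z ^ ((((Real.pi - θ) / (2 * Real.pi) : ℝ)) : ℂ)

/-- `δ(z) = [−√π(z−1) − i√θ(z+1)]^{(π−θ)/(2π)} [−√π(z−1) + i√θ(z+1)]^{(π−θ)/(2π)}`. -/
noncomputable def deltaF (θ : ℝ) (z : ℂ) : ℂ :=
  (-((Real.sqrt Real.pi : ℝ) : ℂ) * (z - 1) - I * ((Real.sqrt θ : ℝ) : ℂ) * (z + 1)) ^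
      ((((Real.pi - θ) / (2 * Real.pi) : ℝ)) : ℂ) *
    (-((Real.sqrt Real.pi : ℝ) : ℂ) * (z - 1) + I * ((Real.sqrt θ : ℝ) : ℂ) * (z + 1)) ^
      ((((Real.pi - θ) / (2 * Real.pi) : ℝ)) : ℂ)

/-- The closed-form Appell-`F₁` antiderivative `F_θ` of the Schwarz–Christoffel
integrand for the exterior map of the isosceles triangle `T_θ`. -/
noncomputable def FTheta (θ : ℝ) (z : ℂ) : ℂ :=
  (z + 1) ^ (((1 - θ / Real.pi : ℝ)) : ℂ) *
    (-phiF θ z / z +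
      ((2 : ℂ) ^ (((θ / Real.pi : ℝ)) : ℂ) *
          (((Real.pi : ℝ)) : ℂ) ^ ((((Real.pi + θ) / (2 * Real.pi) : ℝ)) : ℂ) /
          (((2 * Real.pi ^ 2 + Real.pi * θ - θ ^ 2 : ℝ)) : ℂ)) *
        (deltaF θ z / psiF θ z) *
        (-2 * (((2 * Real.pi - θ : ℝ)) : ℂ) *
            appellF1 (1 - θ / Real.pi) ((Real.pi - θ) / (2 * Real.pi))
              ((Real.pi - θ) / (2 * Real.pi)) (2 - θ / Real.pi) (xiF θ z) (etaF θ z) +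
          (((Real.pi + θ : ℝ)) : ℂ) * (z + 1) *
            appellF1 (2 - θ / Real.pi) ((Real.pi - θ) / (2 * Real.pi))
              ((Real.pi - θ) / (2 * Real.pi)) (3 - θ / Real.pi) (etaF θ z) (xiF θ z)))

/-! Write `F_θ(z) = -h(z)/z + g(z)` with `h(z) = (z+1)^{1-θ/π} φ(z)`. Then `h(0) = 1` and
`h'(0) = (1 - θ/π) + (θ - π)/π = 0`, so `(1 - h(z))/z → 0` and `F_θ(z) + 1/z → g(0)`, provided `g`
is continuous at `0`. For `0 ≤ θ < π` this holds because `|ξ(0)|, |η(0)| < 1`, so that dominated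
convergence applies to the Euler integrals of both Appell functions. At `θ = π/2` one has
`δ(0) = |√π + i√θ|^{1/2} = (3π/2)^{1/4}`, and the constants in `g(0)` collapse to `2^{5/4}/3^{3/4}`. -/

open Filter Topology

lemma one_sub_mem_slitPlane {w : ℂ} (hw : ‖w‖ < 1) : 1 - w ∈ slitPlane := by
  simpa [sub_eq_add_neg] using mem_slitPlane_of_norm_lt_one (z := -w) (by simpa using hw)

lemma norm_one_sub_cpow_le {w : ℂ} {r : ℝ} (hw : ‖w‖ ≤ r) (hr : r < 1) (t : ℝ) :
    ‖(1 - w) ^ (t : ℂ)‖ ≤ (1 - r) ^ t + (1 + r) ^ t := by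
  have hlo : 1 - r ≤ ‖1 - w‖ := by
    have := norm_sub_norm_le (1 : ℂ) w
    rw [norm_one] at this
    linarith
  have hhi : ‖1 - w‖ ≤ 1 + r := (norm_sub_le _ _).trans (by rw [norm_one]; linarith)
  rw [norm_cpow_real]
  rcases le_total 0 t with ht | ht
  · exact (Real.rpow_le_rpow (norm_nonneg _) hhi ht).trans
      (le_add_of_nonneg_left (Real.rpow_nonneg (by linarith) _))
  · exact (Real.rpow_le_rpow_of_nonpos (by linarith) hlo ht).trans
      (le_add_of_nonneg_right (Real.rpow_nonneg (by linarith) _))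

theorem continuousAt_appellF1 {a b b' c : ℝ} (ha : 0 < a) (hac : a < c) {p : ℂ × ℂ}
    (hx : ‖p.1‖ < 1) (hy : ‖p.2‖ < 1) :
    ContinuousAt (fun q : ℂ × ℂ => appellF1 a b b' c q.1 q.2) p := by
  obtain ⟨r, hpr, hr⟩ := exists_between (max_lt hx hy)
  have hnear : ∀ᶠ q : ℂ × ℂ in 𝓝 p, ‖q.1‖ < r ∧ ‖q.2‖ < r :=
    (continuous_fst.norm.continuousAt.eventually_lt continuousAt_const
      ((le_max_left _ _).trans_lt hpr)).and
    (continuous_snd.norm.continuousAt.eventually_lt continuousAt_const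
      ((le_max_right _ _).trans_lt hpr))
  have hmul : ∀ {s : ℝ} {w : ℂ}, s ∈ Set.uIoc 0 1 → ‖w‖ < r → ‖(s : ℂ) * w‖ ≤ r := by
    intro s w hs hw
    rw [Set.uIoc_of_le zero_le_one] at hs
    rw [norm_mul, norm_real, Real.norm_of_nonneg hs.1.le]
    nlinarith [norm_nonneg w, hs.2]
  -- Near `p` the integrand is dominated by the Beta integrand times constants.
  refine continuousAt_const.mul (intervalIntegral.continuousAt_of_dominated_interval
    (bound := fun s => ‖(s : ℂ) ^ ((a : ℂ) - 1) * (1 - (s : ℂ)) ^ (((c - a : ℝ) : ℂ) - 1)‖ *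
      ((1 - r) ^ (-b) + (1 + r) ^ (-b)) * ((1 - r) ^ (-b') + (1 + r) ^ (-b'))) ?_ ?_ ?_ ?_)
  · exact Eventually.of_forall fun q => by fun_prop
  · filter_upwards [hnear] with q hq
    refine Eventually.of_forall fun s hs => ?_
    have hcast : ((c : ℂ) - (a : ℂ) - 1) = ((c - a : ℝ) : ℂ) - 1 := by push_cast; ring
    rw [hcast, norm_mul, norm_mul, norm_mul, ← ofReal_neg, ← ofReal_neg]
    gcongr
    · exact mul_nonneg (by positivity)
        ((norm_nonneg _).trans (norm_one_sub_cpow_le (hmul hs hq.1) hr _))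
    · exact norm_one_sub_cpow_le (hmul hs hq.1) hr _
    · exact norm_one_sub_cpow_le (hmul hs hq.2) hr _
  · exact ((betaIntegral_convergent (by simpa using ha) (by simpa using hac)).norm.mul_const _
      ).mul_const _
  · refine Eventually.of_forall fun s hs => ?_
    have hslit : ∀ w : ℂ, ‖w‖ < r → 1 - (s : ℂ) * w ∈ slitPlane := fun w hw =>
      one_sub_mem_slitPlane ((hmul hs hw).trans_lt hr)
    have h1 := hslit p.1 ((le_max_left _ _).trans_lt hpr)
    have h2 := hslit p.2 ((le_max_right _ _).trans_lt hpr)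
    fun_prop (disch := assumption)

theorem ContinuousAt.appellF1 {X : Type*} [TopologicalSpace X] {a b b' c : ℝ} {f g : X → ℂ}
    {x : X} (hf : ContinuousAt f x) (hg : ContinuousAt g x) (ha : 0 < a) (hac : a < c)
    (hfx : ‖f x‖ < 1) (hgx : ‖g x‖ < 1) :
    ContinuousAt (fun y => appellF1 a b b' c (f y) (g y)) x :=
  (continuousAt_appellF1 (p := (f x, g x)) ha hac hfx hgx).comp (f := fun y => (f y, g y))
    (hf.prodMk hg)

lemma conj_cpow_mul_cpow {w : ℂ} (hw : w ∈ slitPlane) (t : ℝ) :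
    (starRingEnd ℂ) w ^ (t : ℂ) * w ^ (t : ℂ) = ((normSq w ^ t : ℝ) : ℂ) := by
  rw [conj_cpow _ _ (slitPlane_arg_ne_pi hw), conj_ofReal, ← normSq_eq_conj_mul_self,
    normSq_eq_norm_sq, norm_cpow_real, normSq_eq_norm_sq, Real.rpow_pow_comm (norm_nonneg _)]

noncomputable def FThetaPoleNumerator (θ : ℝ) (z : ℂ) : ℂ :=
  (z + 1) ^ (((1 - θ / Real.pi : ℝ)) : ℂ) * phiF θ z

noncomputable def FThetaRegularPart (θ : ℝ) (z : ℂ) : ℂ :=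
  (z + 1) ^ (((1 - θ / Real.pi : ℝ)) : ℂ) *
    (((2 : ℂ) ^ (((θ / Real.pi : ℝ)) : ℂ) *
          (((Real.pi : ℝ)) : ℂ) ^ ((((Real.pi + θ) / (2 * Real.pi) : ℝ)) : ℂ) /
          (((2 * Real.pi ^ 2 + Real.pi * θ - θ ^ 2 : ℝ)) : ℂ)) *
        (deltaF θ z / psiF θ z) *
        (-2 * (((2 * Real.pi - θ : ℝ)) : ℂ) *
            appellF1 (1 - θ / Real.pi) ((Real.pi - θ) / (2 * Real.pi))
              ((Real.pi - θ) / (2 * Real.pi)) (2 - θ / Real.pi) (xiF θ z) (etaF θ z) +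
          (((Real.pi + θ : ℝ)) : ℂ) * (z + 1) *
            appellF1 (2 - θ / Real.pi) ((Real.pi - θ) / (2 * Real.pi))
              ((Real.pi - θ) / (2 * Real.pi)) (3 - θ / Real.pi) (etaF θ z) (xiF θ z)))

lemma FTheta_eq (θ : ℝ) (z : ℂ) :
    FTheta θ z = -FThetaPoleNumerator θ z / z + FThetaRegularPart θ z := by
  unfold FTheta FThetaPoleNumerator FThetaRegularPart
  ring

lemma continuous_baseF (θ : ℝ) : Continuous (baseF θ) := by
  unfold baseF
  fun_prop

lemma hasDerivAt_baseF_zero (θ : ℝ) :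
    HasDerivAt (baseF θ) (2 * (θ - Real.pi) / (Real.pi + θ)) 0 := by
  have h : HasDerivAt (baseF θ) _ 0 :=
    (((((hasDerivAt_id (0 : ℂ)).sub_const 1).fun_pow 2).const_mul (Real.pi : ℂ)).add
      ((((hasDerivAt_id (0 : ℂ)).add_const 1).fun_pow 2).const_mul (θ : ℂ))).div_const
      ((Real.pi + θ : ℝ) : ℂ)
  convert h using 1
  push_cast [id]
  ring

lemma continuousAt_deltaF_zero (θ : ℝ) : ContinuousAt (deltaF θ) 0 := by
  have hπ : 0 < √Real.pi := Real.sqrt_pos.2 Real.pi_pos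
  unfold deltaF
  fun_prop (disch := simp [mem_slitPlane_iff, hπ])

section

variable {θ : ℝ}

lemma baseF_zero (hθ : Real.pi + θ ≠ 0) : baseF θ 0 = 1 := by
  rw [baseF, div_eq_one_iff_eq (by exact_mod_cast hθ)]
  push_cast
  ring

lemma FThetaPoleNumerator_zero (hθ : Real.pi + θ ≠ 0) : FThetaPoleNumerator θ 0 = 1 := by
  simp [FThetaPoleNumerator, phiF, baseF_zero hθ]

lemma hasDerivAt_FThetaPoleNumerator_zero (hθ : Real.pi + θ ≠ 0) :
    HasDerivAt (FThetaPoleNumerator θ) 0 0 := by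
  have h : HasDerivAt (FThetaPoleNumerator θ) _ 0 :=
    (((hasDerivAt_id (0 : ℂ)).add_const 1).cpow_const (c := ((1 - θ / Real.pi : ℝ) : ℂ))
      (by simp)).mul
    ((hasDerivAt_baseF_zero θ).cpow_const (c := (((Real.pi + θ) / (2 * Real.pi) : ℝ) : ℂ))
      (by simp [baseF_zero hθ]))
  convert h using 1
  have hπ : (Real.pi : ℂ) ≠ 0 := by exact_mod_cast Real.pi_ne_zero
  have hθ' : (Real.pi : ℂ) + θ ≠ 0 := by exact_mod_cast hθ
  simp only [id, zero_add, one_cpow, phiF, baseF_zero hθ]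
  push_cast
  field_simp
  ring

lemma norm_xiF_zero_lt_one (h0 : 0 ≤ θ) (hθ : θ < Real.pi) : ‖xiF θ 0‖ < 1 := by
  have hπ : 0 < √Real.pi := Real.sqrt_pos.2 Real.pi_pos
  have hlt : √θ < √Real.pi := Real.sqrt_lt_sqrt h0 hθ
  rw [xiF, zero_add, mul_one, norm_div, div_lt_one (by simp; positivity)]
  calc ‖(√Real.pi : ℂ) - I * √θ‖ ≤ ‖(√Real.pi : ℂ)‖ + ‖I * √θ‖ := norm_sub_le _ _
    _ < ‖2 * (√Real.pi : ℂ)‖ := by simp [abs_of_nonneg, Real.sqrt_nonneg]; linarith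

lemma norm_etaF_zero_lt_one (h0 : 0 ≤ θ) (hθ : θ < Real.pi) : ‖etaF θ 0‖ < 1 := by
  have hπ : 0 < √Real.pi := Real.sqrt_pos.2 Real.pi_pos
  have hlt : √θ < √Real.pi := Real.sqrt_lt_sqrt h0 hθ
  rw [etaF, zero_add, mul_one, norm_div, div_lt_one (by simp; positivity)]
  calc ‖(√Real.pi : ℂ) + I * √θ‖ ≤ ‖(√Real.pi : ℂ)‖ + ‖I * √θ‖ := norm_add_le _ _
    _ < ‖2 * (√Real.pi : ℂ)‖ := by simp [abs_of_nonneg, Real.sqrt_nonneg]; linarith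

lemma continuousAt_FThetaRegularPart_zero (h0 : 0 ≤ θ) (hθ : θ < Real.pi) :
    ContinuousAt (FThetaRegularPart θ) 0 := by
  have hθ' : Real.pi + θ ≠ 0 := by linarith [Real.pi_pos]
  have hξ : ContinuousAt (xiF θ) 0 := by unfold xiF; fun_prop
  have hη : ContinuousAt (etaF θ) 0 := by unfold etaF; fun_prop
  have ha : 0 < 1 - θ / Real.pi := by rw [sub_pos, div_lt_one Real.pi_pos]; exact hθ
  have hA₁ := hξ.appellF1 hη (b := (Real.pi - θ) / (2 * Real.pi))
    (b' := (Real.pi - θ) / (2 * Real.pi)) (c := 2 - θ / Real.pi) ha (by linarith)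
    (norm_xiF_zero_lt_one h0 hθ) (norm_etaF_zero_lt_one h0 hθ)
  have hA₂ := hη.appellF1 hξ (b := (Real.pi - θ) / (2 * Real.pi))
    (b' := (Real.pi - θ) / (2 * Real.pi)) (a := 2 - θ / Real.pi) (c := 3 - θ / Real.pi)
    (by linarith) (by linarith) (norm_etaF_zero_lt_one h0 hθ) (norm_xiF_zero_lt_one h0 hθ)
  have hψ : ContinuousAt (psiF θ) 0 :=
    (continuous_baseF θ).continuousAt.cpow continuousAt_const (by simp [baseF_zero hθ'])
  have hψ₀ : psiF θ 0 ≠ 0 := by simp [psiF, baseF_zero hθ']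
  have hδ := continuousAt_deltaF_zero θ
  have hpow : ContinuousAt (fun z : ℂ => (z + 1) ^ (((1 - θ / Real.pi : ℝ)) : ℂ)) 0 := by
    fun_prop (disch := simp)
  unfold FThetaRegularPart
  fun_prop (disch := assumption)

lemma deltaF_zero (h0 : 0 ≤ θ) :
    deltaF θ 0 = (((Real.pi + θ) ^ ((Real.pi - θ) / (2 * Real.pi)) : ℝ) : ℂ) := by
  set w : ℂ := √Real.pi + I * √θ
  have hw : w ∈ slitPlane := by simp [w, mem_slitPlane_iff, Real.pi_pos]
  have hnorm : normSq w = Real.pi + θ := by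
    simp [w, normSq_apply, Real.mul_self_sqrt Real.pi_pos.le, Real.mul_self_sqrt h0]
  have hconj : (starRingEnd ℂ) w = √Real.pi - I * √θ := by simp [w, sub_eq_add_neg]
  rw [← hnorm, ← conj_cpow_mul_cpow hw, hconj, deltaF]
  congr 2 <;> ring

theorem tendsto_FTheta_add_inv (h0 : 0 ≤ θ) (hθ : θ < Real.pi) :
    Tendsto (fun z => FTheta θ z + 1 / z) (𝓝[≠] 0) (𝓝 (FThetaRegularPart θ 0)) := by
  have hθ' : Real.pi + θ ≠ 0 := by linarith [Real.pi_pos]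
  have hslope := hasDerivAt_iff_tendsto_slope.mp (hasDerivAt_FThetaPoleNumerator_zero hθ')
  have hreg : Tendsto (FThetaRegularPart θ) (𝓝[≠] 0) (𝓝 (FThetaRegularPart θ 0)) :=
    (continuousAt_FThetaRegularPart_zero h0 hθ).tendsto.mono_left nhdsWithin_le_nhds
  have h := hslope.neg.add hreg
  rw [neg_zero, zero_add] at h
  refine h.congr' (eventually_nhdsWithin_of_forall fun z (hz : z ≠ 0) => ?_)
  dsimp only
  rw [FTheta_eq, slope_def_field, FThetaPoleNumerator_zero hθ']
  field_simp
  ring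

end

-- Comparing fourth powers clears every fractional exponent.
lemma half_pi_prefactor_eq :
    (2 : ℝ) ^ (1 / 2 : ℝ) * Real.pi ^ (3 / 4 : ℝ) / (9 / 4 * Real.pi ^ 2) *
        (3 * Real.pi / 2) ^ (1 / 4 : ℝ) * (3 * Real.pi / 2) =
      (2 : ℝ) ^ ((5 : ℝ) / 4) / (3 : ℝ) ^ ((3 : ℝ) / 4) := by
  have hπ := Real.pi_pos
  have h4 : ∀ {x : ℝ} (k : ℝ), 0 ≤ x → (x ^ (k / 4)) ^ 4 = x ^ k := fun k hx => by
    rw [← Real.rpow_mul_natCast hx]; norm_num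
  rw [← pow_left_inj₀ (by positivity) (by positivity) four_ne_zero]
  simp only [div_pow, mul_pow]
  rw [show (1 / 2 : ℝ) = 2 / 4 by norm_num,
    h4 _ zero_le_two, h4 _ hπ.le, h4 _ (by positivity), h4 _ zero_le_two, h4 _ zero_le_three]
  norm_num
  field_simp
  ring

lemma xiF_half_pi_zero : xiF (Real.pi / 2) 0 = (2 - I * √2) / 4 := by
  have h2 : (√2 : ℂ) * √2 = 2 := by norm_cast; exact Real.mul_self_sqrt zero_le_two
  have hπ : (√Real.pi : ℂ) ≠ 0 := by exact_mod_cast (Real.sqrt_pos.2 Real.pi_pos).ne'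
  have hs2 : (√2 : ℂ) ≠ 0 := by exact_mod_cast (Real.sqrt_pos.2 zero_lt_two).ne'
  rw [xiF, Real.sqrt_div Real.pi_pos.le]
  push_cast
  field_simp
  linear_combination 2 * I * h2

lemma etaF_half_pi_zero : etaF (Real.pi / 2) 0 = (2 + I * √2) / 4 := by
  have h2 : (√2 : ℂ) * √2 = 2 := by norm_cast; exact Real.mul_self_sqrt zero_le_two
  have hπ : (√Real.pi : ℂ) ≠ 0 := by exact_mod_cast (Real.sqrt_pos.2 Real.pi_pos).ne'
  have hs2 : (√2 : ℂ) ≠ 0 := by exact_mod_cast (Real.sqrt_pos.2 zero_lt_two).ne'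
  rw [etaF, Real.sqrt_div Real.pi_pos.le]
  push_cast
  field_simp
  linear_combination -2 * I * h2

lemma FThetaRegularPart_half_pi_zero :
    FThetaRegularPart (Real.pi / 2) 0 =
      -(((2 : ℝ) ^ ((5 : ℝ) / 4) / (3 : ℝ) ^ ((3 : ℝ) / 4) : ℝ) : ℂ) *
        (2 * appellF1 (1 / 2) (1 / 4) (1 / 4) (3 / 2) ((2 - I * √2) / 4) ((2 + I * √2) / 4) -
          appellF1 (3 / 2) (1 / 4) (1 / 4) (5 / 2) ((2 + I * √2) / 4) ((2 - I * √2) / 4)) := by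
  have hπ := Real.pi_pos
  have hθ : Real.pi + Real.pi / 2 ≠ 0 := by positivity
  have e1 : Real.pi / 2 / Real.pi = 1 / 2 := by field_simp
  have e2 : (Real.pi - Real.pi / 2) / (2 * Real.pi) = 1 / 4 := by field_simp; ring
  have e3 : (Real.pi + Real.pi / 2) / (2 * Real.pi) = 3 / 4 := by field_simp; ring
  rw [FThetaRegularPart, deltaF_zero (by positivity), psiF, baseF_zero hθ, xiF_half_pi_zero,
    etaF_half_pi_zero, ← half_pi_prefactor_eq, e1, e2, e3]
  norm_num
  rw [ofReal_cpow zero_le_two, ofReal_cpow hπ.le,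
    show Real.pi + Real.pi / 2 = 3 * Real.pi / 2 by ring,
    show (2 * Real.pi ^ 2 + Real.pi * (Real.pi / 2) - (Real.pi / 2) ^ 2 : ℂ) =
      9 / 4 * Real.pi ^ 2 by ring]
  push_cast
  ring

/-- for `θ = π/2`, `F_{π/2}(z) + 1/z` tends, as `z → 0` in the
punctured open unit disk, to
`−(2^{5/4}/3^{3/4})·[2F₁(1/2,1/4,1/4,3/2;(2−i√2)/4,(2+i√2)/4)
  − F₁(3/2,1/4,1/4,5/2;(2+i√2)/4,(2−i√2)/4)]`;
consequently the outer conformal center of the isosceles right triangle is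
`λ = κ·(2^{5/4}/3^{3/4})·[2F₁(…) − F₁(…)]`, where
`κ = 3^{3/4}Γ(1/4)²/(2^{7/2}π^{3/2})` is its outer radius (so `λ` is `−κ`
times the above limit). -/
theorem stmt_14 :
    let bracket : ℂ :=
      2 * appellF1 (1 / 2) (1 / 4) (1 / 4) (3 / 2)
            ((2 - I * ((Real.sqrt 2 : ℝ) : ℂ)) / 4) ((2 + I * ((Real.sqrt 2 : ℝ) : ℂ)) / 4) -
        appellF1 (3 / 2) (1 / 4) (1 / 4) (5 / 2)
            ((2 + I * ((Real.sqrt 2 : ℝ) : ℂ)) / 4) ((2 - I * ((Real.sqrt 2 : ℝ) : ℂ)) / 4)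
    let L : ℂ := -(((2 : ℝ) ^ ((5 : ℝ) / 4) / (3 : ℝ) ^ ((3 : ℝ) / 4) : ℝ) : ℂ) * bracket
    let κ : ℝ := (3 : ℝ) ^ ((3 : ℝ) / 4) * Real.Gamma (1 / 4) ^ 2 /
      ((2 : ℝ) ^ ((7 : ℝ) / 2) * Real.pi ^ ((3 : ℝ) / 2))
    Filter.Tendsto (fun z : ℂ => FTheta (Real.pi / 2) z + 1 / z)
        (nhdsWithin 0 (Metric.ball (0 : ℂ) 1 \ {0})) (nhds L) ∧
      ((κ : ℝ) : ℂ) * (((2 : ℝ) ^ ((5 : ℝ) / 4) / (3 : ℝ) ^ ((3 : ℝ) / 4) : ℝ) : ℂ) * bracket =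
        -(((κ : ℝ) : ℂ)) * L := by
  intro bracket L κ
  refine ⟨?_, by simp only [L]; ring⟩
  have h := tendsto_FTheta_add_inv (θ := Real.pi / 2) (by positivity) (by linarith [Real.pi_pos])
  rw [FThetaRegularPart_half_pi_zero] at h
  exact h.mono_left (nhdsWithin_mono _ fun z hz => hz.2)
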